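/- arXiv:1912.03870 — 3 statements merged into one kernel-verified Lean document; each statement's English description precedes it below -/
import Mathlib

section
/- For every integer n ≥ 1, one has ∑_{j=1}^{n} C_j · F^j_n = 1/(n+1), where C_j = (−1)^j B_j / j! with B_j the j-th Bernoulli number, and F^j_n denotes the coefficient of x^n in the j-th power of the formal power series f(x) = ∑_{k≥1} x^k/k (i.e. of (−log(1−x))^j) over ℚ. (Lemma 2.3, first identity.) -/
/-- The formal power series `f(x) = ∑_{k ≥ 1} x^k / k = -log(1-x)` over `ℚ`. -/
noncomputable def logSeries : PowerSeries ℚ :=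
  PowerSeries.mk fun k => if k = 0 then 0 else (k : ℚ)⁻¹

/-- `F^j_n`, the coefficient of `x^n` in `f(x)^j`. -/
noncomputable def Fcoeff (j n : ℕ) : ℚ :=
  PowerSeries.coeff n (logSeries ^ j)

/-- `C_j = (-1)^j B_j / j!` where `B_j` is the `j`-th Bernoulli number
(with generating function `z / (e^z - 1)`). -/
noncomputable def Ccoeff (j : ℕ) : ℚ :=
  (-1) ^ j * bernoulli j / (j.factorial : ℚ)
/-!
Write `f = -log(1 - x)` for `logSeries`. Since `B'_j = (-1)^j B_j`, the `C_j` are the coefficients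
of `z / (1 - e^{-z})`, Mathlib's `bernoulli'PowerSeries`, which satisfies
`C(z) (e^z - 1) = z e^z`. Substituting `z = f` and using `e^f = 1 / (1 - x)` gives `C(f) x = f`,
so `∑_j C_j F^j_n = [x^n] C(f) = [x^{n+1}] f = 1 / (n + 1)`.
-/

open PowerSeries

section SubstConstantCoeffZero

variable {R : Type*} [CommRing R] {b : R⟦X⟧}

theorem PowerSeries.coeff_pow_eq_zero_of_lt (hb : constantCoeff b = 0) {n d : ℕ} (h : n < d) :
    coeff n (b ^ d) = 0 :=
  coeff_of_lt_order _ <|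
    (le_order_pow_of_constantCoeff_eq_zero d hb).trans_lt' (by exact_mod_cast h)

theorem PowerSeries.coeff_subst_eq_sum_range (hb : constantCoeff b = 0) (f : R⟦X⟧) (n : ℕ) :
    coeff n (f.subst b) = ∑ d ∈ Finset.range (n + 1), coeff d f * coeff n (b ^ d) := by
  rw [coeff_subst' (HasSubst.of_constantCoeff_zero' hb)]
  refine finsum_eq_sum_of_support_subset _ fun d hd => ?_
  by_contra hdn
  simp only [Finset.coe_range, Set.mem_Iio, not_lt] at hdn
  exact hd (by simp [coeff_pow_eq_zero_of_lt hb hdn])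

theorem PowerSeries.constantCoeff_subst_of_constantCoeff_zero (hb : constantCoeff b = 0)
    (f : R⟦X⟧) : constantCoeff (f.subst b) = constantCoeff f := by
  simpa using coeff_subst_eq_sum_range hb f 0

end SubstConstantCoeffZero

theorem constantCoeff_logSeries : constantCoeff logSeries = 0 := by
  simp [logSeries, ← coeff_zero_eq_constantCoeff_apply]

theorem derivative_logSeries : d⁄dX ℚ logSeries = mk 1 := by
  ext k
  rw [coeff_derivative, logSeries, coeff_mk, coeff_mk, if_neg k.succ_ne_zero]
  simp only [Nat.cast_add, Nat.cast_one, Pi.one_apply]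
  field_simp

theorem exp_subst_logSeries_mul_one_sub_X : (exp ℚ).subst logSeries * (1 - X) = 1 := by
  have hf := HasSubst.of_constantCoeff_zero' constantCoeff_logSeries
  apply derivative.ext
  -- `(e^f (1 - x))' = e^f (f' (1 - x) - 1)` and `f' = 1 / (1 - x)`
  · rw [Derivation.leibniz, derivative_subst hf, derivative_exp, derivative_logSeries]
    simp only [smul_eq_mul, map_sub, Derivation.map_one_eq_zero, derivative_X]
    linear_combination (exp ℚ).subst logSeries * mk_one_mul_one_sub_eq_one ℚ
  · simp [constantCoeff_subst_of_constantCoeff_zero constantCoeff_logSeries, constantCoeff_exp]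

theorem Ccoeff_eq_coeff_bernoulli'PowerSeries (j : ℕ) :
    Ccoeff j = coeff j (bernoulli'PowerSeries ℚ) := by
  simp [Ccoeff, bernoulli'PowerSeries, bernoulli'_eq_bernoulli]

theorem bernoulli'PowerSeries_subst_logSeries_mul_X :
    (bernoulli'PowerSeries ℚ).subst logSeries * X = logSeries := by
  have hf := HasSubst.of_constantCoeff_zero' constantCoeff_logSeries
  have h := congrArg (substAlgHom hf) (bernoulli'PowerSeries_mul_exp_sub_one ℚ)
  simp only [map_mul, map_sub, map_one, substAlgHom_X, coe_substAlgHom] at h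
  linear_combination (1 - X) * h +
    (logSeries - (bernoulli'PowerSeries ℚ).subst logSeries) * exp_subst_logSeries_mul_one_sub_X

/-- Lemma 2.3, first identity: `∑_{j=1}^n C_j F^j_n = 1/(n+1)`. -/
theorem sum_Ccoeff_mul_Fcoeff (n : ℕ) (hn : 1 ≤ n) :
    ∑ j ∈ Finset.Icc 1 n, Ccoeff j * Fcoeff j n = 1 / (n + 1 : ℚ) := by
  have hFcoeff_zero : Fcoeff 0 n = 0 := by simp [Fcoeff, coeff_one, Nat.one_le_iff_ne_zero.mp hn]
  calc ∑ j ∈ Finset.Icc 1 n, Ccoeff j * Fcoeff j n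
      = ∑ j ∈ Finset.range (n + 1), Ccoeff j * Fcoeff j n := by
        rw [Finset.range_eq_Ico, Finset.sum_eq_sum_Ico_succ_bot (by omega : 0 < n + 1),
          hFcoeff_zero, mul_zero, zero_add, Finset.Ico_add_one_right_eq_Icc]
    _ = coeff n ((bernoulli'PowerSeries ℚ).subst logSeries) := by
        simp only [coeff_subst_eq_sum_range constantCoeff_logSeries,
          Ccoeff_eq_coeff_bernoulli'PowerSeries, Fcoeff]
    _ = coeff (n + 1) logSeries := by
        rw [← coeff_succ_mul_X, bernoulli'PowerSeries_subst_logSeries_mul_X]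
    _ = 1 / (n + 1 : ℚ) := by simp [logSeries]
end

section
/- Let K ≥ 1, let R be a commutative ℚ-algebra and x ∈ R. In the algebra of (K+1)×(K+1) matrices over R with rows and columns indexed by 0,1,…,K, let E_{i,j} denote the matrix units and let J = ∑_{i=1}^{K} E_{i,i−1} be the subdiagonal shift matrix (so J^n = ∑_{j=n}^{K} E_{j,j−n} and J^{K+1} = 0). Then the ordered product (1 + x E_{K,K−1})(1 + x E_{K−1,K−2}) ⋯ (1 + x E_{1,0}) equals exp( ∑_{n=1}^{K} (x^n/n) J^n ), and both sides equal ∑_{k=0}^{K} x^k J^k. (This is the gl-matrix form of equation (2.13) in the proof of Proposition 2.2, under the Lie algebra isomorphism sending the fermionic bilinear b(−j)c(j−n) to E_{j,j−n}; note 1 + xE_{i,i−1} = exp(xE_{i,i−1}) since E_{i,i−1}^2 = 0.) -/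
/-!
The increasing product `∏ (1 - x E_{i+1,i})` is `1 - x J`, because `E_{i+1,i} E_{j+1,j} = 0` for
`i ≤ j`. Since `(1 + x E)(1 - x E) = 1` when `E² = 0`, the decreasing product of the
`1 + x E_{i+1,i}` is its inverse, the geometric series `∑ (x J)^k` (as `J^{K+1} = 0`).

For the exponential it suffices that `exp(∑_{n ≤ K} X^n / n) ≡ ∑_{k ≤ K} X^k mod X^{K+1}` in
`ℚ[X]`, evaluated at the nilpotent `x J`. Formally `(1 - X) exp(-log(1 - X))` has derivative `0`;
after truncation the derivative is still divisible by `X^K`, so the product is `≡ 1` modulo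
`X^{K+1}`, and `1 - X` is invertible modulo `X^{K+1}`.
-/

open Finset Matrix Polynomial
open scoped Nat

lemma List.prod_map_one_add_of_pairwise {ι M : Type*} [Semiring M] {l : List ι} {e : ι → M}
    (h : l.Pairwise fun i j => e i * e j = 0) :
    (l.map fun i => 1 + e i).prod = 1 + (l.map e).sum := by
  induction l with
  | nil => simp
  | cons i l ih =>
    rw [List.pairwise_cons] at h
    have hi : e i * (l.map e).sum = 0 := by
      rw [← List.sum_map_mul_left]
      exact List.sum_eq_zero (by simpa using h.1)
    simp only [List.map_cons, List.prod_cons, List.sum_cons, ih h.2, add_mul, one_mul, mul_add,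
      mul_one, hi]
    abel

lemma List.prod_map_reverse_mul_prod_map_eq_one {ι M : Type*} [Monoid M] {l : List ι}
    {u v : ι → M} (h : ∀ i ∈ l, u i * v i = 1) :
    (l.reverse.map u).prod * (l.map v).prod = 1 := by
  induction l with
  | nil => simp
  | cons i l ih =>
    rw [List.forall_mem_cons] at h
    simp only [List.reverse_cons, List.map_append, List.prod_append, List.map_cons, List.map_nil,
      List.prod_cons, List.prod_nil, mul_one]
    rw [mul_assoc, ← mul_assoc (u i), h.1, one_mul, ih h.2]

namespace Matrix

variable {R : Type*} [Semiring R] {m : ℕ} {M : Matrix (Fin m) (Fin m) R}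

lemma pow_apply_eq_zero_of_strictLower (hM : ∀ a b, a ≤ b → M a b = 0) (n : ℕ) {a b : Fin m}
    (hab : (a : ℕ) < b + n) : (M ^ n) a b = 0 := by
  induction n generalizing a with
  | zero => exact one_apply_ne (by grind)
  | succ n ih =>
    rw [pow_succ', mul_apply]
    refine sum_eq_zero fun c _ => ?_
    rcases le_or_gt a c with hac | hca
    · rw [hM a c hac, zero_mul]
    · rw [ih (by omega), mul_zero]

lemma pow_eq_zero_of_strictLower (hM : ∀ a b, a ≤ b → M a b = 0) : M ^ m = 0 := by
  ext a b
  exact pow_apply_eq_zero_of_strictLower hM m (by omega)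

end Matrix

def shiftMatrix (K : ℕ) (R : Type*) [Semiring R] : Matrix (Fin (K + 1)) (Fin (K + 1)) R :=
  ∑ i : Fin K, single i.succ i.castSucc 1

lemma single_succ_castSucc_mul_single_succ_castSucc_of_le {K : ℕ} {R : Type*} [Semiring R]
    {i j : Fin K} (hij : i ≤ j) :
    single i.succ i.castSucc (1 : R) * single j.succ j.castSucc 1 = 0 :=
  single_mul_single_of_ne _ _ _ _ (by simp [Fin.ext_iff]; omega) _

lemma shiftMatrix_pow_succ_eq_zero (K : ℕ) (R : Type*) [Semiring R] :
    shiftMatrix K R ^ (K + 1) = 0 := by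
  refine pow_eq_zero_of_strictLower fun a b hab => ?_
  rw [shiftMatrix, Matrix.sum_apply]
  refine sum_eq_zero fun i _ => single_apply_of_ne _ _ _ _ _ ?_
  rintro ⟨rfl, rfl⟩
  exact (Fin.castSucc_lt_succ (i := i)).not_ge hab

lemma prod_one_add_smul_single_eq_geom_sum_shiftMatrix {R : Type*} [CommRing R] (K : ℕ) (x : R) :
    ((List.finRange K).reverse.map
        fun i => (1 : Matrix (Fin (K + 1)) (Fin (K + 1)) R) + x • single i.succ i.castSucc 1).prod
      = ∑ k ∈ range (K + 1), x ^ k • shiftMatrix K R ^ k := by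
  set P := ((List.finRange K).reverse.map
    fun i => (1 : Matrix (Fin (K + 1)) (Fin (K + 1)) R) + x • single i.succ i.castSucc 1).prod
  set N := x • shiftMatrix K R
  have hsub : 1 - N =
      ((List.finRange K).map fun i => 1 + (-x) • single i.succ i.castSucc 1).prod := by
    rw [List.prod_map_one_add_of_pairwise, ← Fin.sum_univ_def, ← smul_sum, neg_smul,
      ← sub_eq_add_neg]
    · rfl
    · refine (List.pairwise_lt_finRange K).imp fun hij => ?_
      rw [smul_mul_smul_comm, single_succ_castSucc_mul_single_succ_castSucc_of_le hij.le,
        smul_zero]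
  have hinv : P * (1 - N) = 1 := by
    rw [hsub, List.prod_map_reverse_mul_prod_map_eq_one]
    intro i _
    rw [mul_add, add_mul, add_mul, smul_mul_smul_comm,
      single_succ_castSucc_mul_single_succ_castSucc_of_le le_rfl]
    simp
  have hgeom : (1 - N) * ∑ k ∈ range (K + 1), N ^ k = 1 := by
    rw [mul_neg_geom_sum, _root_.smul_pow, shiftMatrix_pow_succ_eq_zero, smul_zero, sub_zero]
  calc P = P * ((1 - N) * ∑ k ∈ range (K + 1), N ^ k) := by rw [hgeom, mul_one]
    _ = ∑ k ∈ range (K + 1), N ^ k := by rw [← mul_assoc, hinv, one_mul]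
    _ = _ := by simp only [N, _root_.smul_pow]

section Truncated

variable {S : Type*} [Ring S] [Algebra ℚ S]

noncomputable def truncExp (K : ℕ) (a : S) : S := ∑ k ∈ range (K + 1), (k ! : ℚ)⁻¹ • a ^ k

/-- The degree-`K` truncation of `-log (1 - a) = ∑ a ^ n / n`. -/
noncomputable def truncNegLog (K : ℕ) (a : S) : S := ∑ n ∈ Icc 1 K, (n : ℚ)⁻¹ • a ^ n

lemma aeval_truncExp (a : S) (K : ℕ) (p : ℚ[X]) :
    aeval a (truncExp K p) = truncExp K (aeval a p) := by
  simp only [truncExp, map_sum, map_smul, map_pow]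

lemma aeval_truncNegLog (a : S) (K : ℕ) (p : ℚ[X]) :
    aeval a (truncNegLog K p) = truncNegLog K (aeval a p) := by
  simp only [truncNegLog, map_sum, map_smul, map_pow]

end Truncated

lemma Polynomial.X_pow_succ_dvd_sub_C_coeff_zero {R : Type*} [Ring R] [NoZeroDivisors R]
    [CharZero R] {f : R[X]} {n : ℕ} (h : X ^ n ∣ derivative f) :
    X ^ (n + 1) ∣ f - C (f.coeff 0) := by
  rw [X_pow_dvd_iff] at h ⊢
  rintro (_ | d) hd
  · simp
  · have hd' := h d (by omega)
    rw [coeff_derivative] at hd'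
    simpa [coeff_C] using (mul_eq_zero.mp hd').resolve_right (by exact_mod_cast d.succ_ne_zero)

lemma Polynomial.aeval_eq_zero_of_X_pow_dvd {R S : Type*} [CommSemiring R] [Semiring S]
    [Algebra R S] {a : S} {n : ℕ} (ha : a ^ n = 0) {p : R[X]} (hp : X ^ n ∣ p) :
    aeval a p = 0 := by
  obtain ⟨q, rfl⟩ := hp
  rw [map_mul, map_pow, aeval_X, ha, zero_mul]

lemma X_dvd_truncNegLog (K : ℕ) : (X : ℚ[X]) ∣ truncNegLog K X :=
  Finset.dvd_sum fun n hn => by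
    rw [smul_eq_C_mul]
    exact dvd_mul_of_dvd_right (dvd_pow_self X (by grind)) _

lemma derivative_truncNegLog_mul_one_sub_X (K : ℕ) :
    derivative (truncNegLog K (X : ℚ[X])) * (1 - X) = 1 - X ^ K := by
  have hgeom : derivative (truncNegLog K (X : ℚ[X])) = ∑ k ∈ range K, X ^ k := by
    rw [truncNegLog, map_sum, ← Ico_add_one_right_eq_Icc, sum_Ico_eq_sum_range,
      Nat.add_sub_cancel]
    refine sum_congr rfl fun k _ => ?_
    rw [derivative_smul, derivative_X_pow, smul_eq_C_mul, ← mul_assoc, ← C_mul,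
      inv_mul_cancel₀ (by positivity), C_1, one_mul, Nat.add_sub_cancel_left]
  rw [hgeom, geom_sum_mul_neg]

lemma derivative_truncExp (K : ℕ) (p : ℚ[X]) :
    derivative (truncExp K p) = (truncExp K p - (K ! : ℚ)⁻¹ • p ^ K) * derivative p := by
  rw [truncExp, sum_range_succ_sub_top, map_sum, sum_range_succ', sum_mul]
  simp only [derivative_smul, derivative_pow, pow_zero, derivative_one, smul_zero, add_zero]
  refine sum_congr rfl fun k _ => ?_
  rw [Nat.add_sub_cancel, smul_eq_C_mul, smul_eq_C_mul, ← mul_assoc, ← mul_assoc, ← C_mul,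
    Nat.factorial_succ]
  congr 2
  push_cast
  field_simp

lemma X_pow_dvd_derivative_one_sub_X_mul_truncExp_truncNegLog (K : ℕ) :
    X ^ K ∣ derivative ((1 - X) * truncExp K (truncNegLog K (X : ℚ[X]))) := by
  set P := truncNegLog K (X : ℚ[X])
  obtain ⟨q, hq⟩ := pow_dvd_pow_of_dvd (X_dvd_truncNegLog K) K
  rw [derivative_mul, derivative_sub, derivative_one, derivative_X, derivative_truncExp,
    smul_eq_C_mul, hq]
  refine ⟨-truncExp K P - C (K ! : ℚ)⁻¹ * q * (1 - X ^ K), ?_⟩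
  linear_combination
    (truncExp K P - C (K ! : ℚ)⁻¹ * (X ^ K * q)) * derivative_truncNegLog_mul_one_sub_X K

lemma coeff_zero_one_sub_X_mul_truncExp_truncNegLog (K : ℕ) :
    ((1 - X) * truncExp K (truncNegLog K (X : ℚ[X]))).coeff 0 = 1 := by
  have hP : (truncNegLog K (X : ℚ[X])).eval 0 = 0 := by
    rw [← coeff_zero_eq_eval_zero, ← X_dvd_iff]
    exact X_dvd_truncNegLog K
  simp [coeff_zero_eq_eval_zero, truncExp, eval_finsetSum, hP, sum_range_succ']

lemma X_pow_succ_dvd_truncExp_truncNegLog_sub_geom_sum (K : ℕ) :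
    X ^ (K + 1) ∣ truncExp K (truncNegLog K (X : ℚ[X])) - ∑ k ∈ range (K + 1), X ^ k := by
  have hF := X_pow_succ_dvd_sub_C_coeff_zero
    (X_pow_dvd_derivative_one_sub_X_mul_truncExp_truncNegLog K)
  rw [coeff_zero_one_sub_X_mul_truncExp_truncNegLog, C_1] at hF
  have hcop : IsCoprime (X ^ (K + 1) : ℚ[X]) (1 - X) := IsCoprime.pow_left ⟨1, 1, by ring⟩
  refine hcop.dvd_of_dvd_mul_right ?_
  have hsplit : (truncExp K (truncNegLog K (X : ℚ[X])) - ∑ k ∈ range (K + 1), X ^ k) * (1 - X) =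
      ((1 - X) * truncExp K (truncNegLog K (X : ℚ[X])) - 1) + X ^ (K + 1) := by
    linear_combination -mul_neg_geom_sum (X : ℚ[X]) (K + 1)
  rw [hsplit]
  exact dvd_add hF dvd_rfl

section Nilpotent

variable {S : Type*} [Ring S] [Algebra ℚ S] {K : ℕ} {N : S}

lemma truncNegLog_pow_eq_zero (hN : N ^ (K + 1) = 0) : truncNegLog K N ^ (K + 1) = 0 := by
  have h := aeval_eq_zero_of_X_pow_dvd hN (pow_dvd_pow_of_dvd (X_dvd_truncNegLog K) (K + 1))
  rwa [map_pow, aeval_truncNegLog, aeval_X] at h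

lemma truncExp_truncNegLog_eq_geom_sum (hN : N ^ (K + 1) = 0) :
    truncExp K (truncNegLog K N) = ∑ k ∈ range (K + 1), N ^ k := by
  have h := aeval_eq_zero_of_X_pow_dvd hN (X_pow_succ_dvd_truncExp_truncNegLog_sub_geom_sum K)
  simpa only [map_sub, aeval_truncExp, aeval_truncNegLog, map_sum, map_pow, aeval_X,
    sub_eq_zero] using h

end Nilpotent

theorem ordered_product_eq_exp_eq_geom_general (K : ℕ)
    (R : Type*) [CommRing R] [Algebra ℚ R] (x : R) :
    let E : Fin (K + 1) → Fin (K + 1) → Matrix (Fin (K + 1)) (Fin (K + 1)) R :=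
      fun i j => Matrix.single i j 1
    let J : Matrix (Fin (K + 1)) (Fin (K + 1)) R := ∑ i : Fin K, E i.succ i.castSucc
    let A : Matrix (Fin (K + 1)) (Fin (K + 1)) R :=
      ∑ n ∈ Finset.Icc 1 K, (((n : ℚ)⁻¹) • (x ^ n • J ^ n))
    A ^ (K + 1) = 0 ∧
    ((List.finRange K).reverse.map
        (fun i => (1 : Matrix (Fin (K + 1)) (Fin (K + 1)) R) + x • E i.succ i.castSucc)).prod
      = ∑ k ∈ Finset.range (K + 1), ((k.factorial : ℚ)⁻¹) • A ^ k ∧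
    (∑ k ∈ Finset.range (K + 1), ((k.factorial : ℚ)⁻¹) • A ^ k)
      = ∑ k ∈ Finset.range (K + 1), x ^ k • J ^ k := by
  intro E J A
  have hN : (x • shiftMatrix K R) ^ (K + 1) = 0 := by
    rw [_root_.smul_pow, shiftMatrix_pow_succ_eq_zero, smul_zero]
  have hA : A = truncNegLog K (x • shiftMatrix K R) := by
    simp only [A, truncNegLog, _root_.smul_pow]
    rfl
  have hexp : truncExp K A = ∑ k ∈ range (K + 1), x ^ k • J ^ k := by
    rw [hA, truncExp_truncNegLog_eq_geom_sum hN]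
    simp only [_root_.smul_pow]
    rfl
  exact ⟨hA ▸ truncNegLog_pow_eq_zero hN,
    (prod_one_add_smul_single_eq_geom_sum_shiftMatrix K x).trans hexp.symm, hexp⟩

/-- Equation (2.13) in matrix (gl) form: in `(K+1) × (K+1)` matrices over a commutative
`ℚ`-algebra `R`, with `E i j` the matrix units and `J = ∑_{i=1}^{K} E_{i,i-1}` the
subdiagonal shift, the ordered product
`(1 + x E_{K,K-1})(1 + x E_{K-1,K-2}) ⋯ (1 + x E_{1,0})`
equals `exp(∑_{n=1}^{K} (x^n/n) J^n)` (the exponential of this nilpotent matrix being the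
finite sum `∑_{k=0}^{K} A^k / k!`, since `A^{K+1} = 0`), and both sides equal
`∑_{k=0}^{K} x^k J^k`. -/
theorem ordered_product_eq_exp_eq_geom (K : ℕ) (hK : 1 ≤ K)
    (R : Type*) [CommRing R] [Algebra ℚ R] (x : R) :
    let E : Fin (K + 1) → Fin (K + 1) → Matrix (Fin (K + 1)) (Fin (K + 1)) R :=
      fun i j => Matrix.single i j 1
    let J : Matrix (Fin (K + 1)) (Fin (K + 1)) R := ∑ i : Fin K, E i.succ i.castSucc
    let A : Matrix (Fin (K + 1)) (Fin (K + 1)) R :=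
      ∑ n ∈ Finset.Icc 1 K, (((n : ℚ)⁻¹) • (x ^ n • J ^ n))
    A ^ (K + 1) = 0 ∧
    ((List.finRange K).reverse.map
        (fun i => (1 : Matrix (Fin (K + 1)) (Fin (K + 1)) R) + x • E i.succ i.castSucc)).prod
      = ∑ k ∈ Finset.range (K + 1), ((k.factorial : ℚ)⁻¹) • A ^ k ∧
    (∑ k ∈ Finset.range (K + 1), ((k.factorial : ℚ)⁻¹) • A ^ k)
      = ∑ k ∈ Finset.range (K + 1), x ^ k • J ^ k :=
  ordered_product_eq_exp_eq_geom_general K R x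
end

section
/- Constant term equals inverse determinant (Appendix A Proposition, a form of the MacMahon Master Theorem): let n ≥ 1, let F = ℚ(d_1,…,d_n) be the field of rational functions in indeterminates d_1,…,d_n, and let u_{ik} (1 ≤ i,k ≤ n, i ≠ k) be further indeterminates. Let T be the n×n matrix over the power series ring R = F[[ u_{ik} : i ≠ k ]] with diagonal entries T_{kk} = d_k and off-diagonal entries T_{ik} = u_{ik}. Define CT ∈ R by CT = ( ∏_{k=1}^{n} d_k^{-1} ) · ∑_{r} (−1)^{|r|} ∏_{k=1}^{n} [ ( ∑_{i≠k} r_{ik} )! / ∏_{i≠k} r_{ik}! ] · ∏_{i≠k} ( u_{ik}/d_k )^{r_{ik}}, where the sum is over all families r = (r_{ik})_{i≠k} of non-negative integers satisfying the balance condition ∑_{i≠k} r_{ik} = ∑_{j≠k} r_{kj} for every k, and |r| = ∑_{i≠k} r_{ik}. Then CT · det T = 1, i.e. CT = (det T)^{-1} in R. (CT is precisely the constant term in z_1,…,z_n of ∏_{k=1}^{n} Z_k^{-1}, where Z_k = ∑_{i=1}^{n} T_{ik} z_k/z_i and each Z_k^{-1} is expanded as the geometric series d_k^{-1} ∑_{m≥0}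 (−1)^m ( ∑_{i≠k} (u_{ik}/d_k) z_k z_i^{-1} )^m.) -/
/-- Index type for the off-diagonal variables `u_{ik}`, `i ≠ k`. -/
def OffDiag (n : ℕ) : Type := {p : Fin n × Fin n // p.1 ≠ p.2}

instance (n : ℕ) : Fintype (OffDiag n) := by unfold OffDiag; infer_instance
instance (n : ℕ) : DecidableEq (OffDiag n) := by unfold OffDiag; infer_instance

/-- The field `F = ℚ(d_1, …, d_n)` of rational functions in `n` indeterminates. -/
noncomputable abbrev DField (n : ℕ) : Type :=
  FractionRing (MvPolynomial (Fin n) ℚ)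

/-- The indeterminate `d_k` viewed inside `ℚ(d_1, …, d_n)`. -/
noncomputable def dgen (n : ℕ) (k : Fin n) : DField n :=
  algebraMap (MvPolynomial (Fin n) ℚ) (DField n) (MvPolynomial.X k)

/-- The matrix `T` over `R = F[[u_{ik} : i ≠ k]]` with `T_{kk} = d_k` and
`T_{ik} = u_{ik}` for `i ≠ k`. -/
noncomputable def Tmat (n : ℕ) :
    Matrix (Fin n) (Fin n) (MvPowerSeries (OffDiag n) (DField n)) :=
  Matrix.of fun i k =>
    if h : i = k then MvPowerSeries.C (σ := OffDiag n) (R := DField n) (dgen n k)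
    else MvPowerSeries.X (⟨(i, k), h⟩ : OffDiag n)

/-- For an exponent family `e = (r_{ik})_{i ≠ k}`, the `k`-th column sum `∑_{i ≠ k} r_{ik}`. -/
def colIn (n : ℕ) (e : OffDiag n →₀ ℕ) (k : Fin n) : ℕ :=
  ∑ i : Fin n, if h : i = k then 0 else e ⟨(i, k), h⟩

/-- For an exponent family `e = (r_{ik})_{i ≠ k}`, the `k`-th row sum `∑_{j ≠ k} r_{kj}`. -/
def rowOut (n : ℕ) (e : OffDiag n →₀ ℕ) (k : Fin n) : ℕ :=
  ∑ j : Fin n, if h : k = j then 0 else e ⟨(k, j), h⟩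

/-- `|r| = ∑_{i ≠ k} r_{ik}`. -/
def totDeg (n : ℕ) (e : OffDiag n →₀ ℕ) : ℕ := ∑ p : OffDiag n, e p

/-- The multinomial coefficient `(∑_{i ≠ k} r_{ik})! / ∏_{i ≠ k} r_{ik}!`. -/
def colMultinomial (n : ℕ) (e : OffDiag n →₀ ℕ) (k : Fin n) : ℕ :=
  Nat.multinomial (Finset.univ.erase k)
    (fun i => if h : i = k then 0 else e ⟨(i, k), h⟩)


/-!
Comparing coefficients of `u^r` and pulling out the powers of the `d_k`, the theorem becomes a
combinatorial identity for every balanced loopless multigraph `q` (with `q i k = r_{ik}` edges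
`i → k`):
`∑_σ sign σ · (-1)^#(support σ) · N(q - P_σ) = [q = 0]`,
where `P_σ` is the set of edges `σ k → k` of `σ` (the sum runs over the `σ` with `P_σ ≤ q`) and
`N(q) = ∏_k (∑_i q_{ik})! / ∏_i q_{ik}!`.

To prove it, pick a vertex `y` with an incoming edge and walk backwards. Expanding `N` along the
in-edges of `y` removes one edge `j → y`; a permutation either fixes `y`, or sends `y` to `j`, and
then its cycle through `y` is cut open at that edge. Composing with a transposition either shortens
such an open path (same sign) or closes it into a 2-cycle (opposite sign). An induction on the
number of edges, for multigraphs whose degrees are those of cycles plus one walk and with the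
visited vertices fixed, shows that all terms cancel.
-/

open Finset Equiv Function
open scoped Nat

theorem Nat.multinomial_eq_sum_multinomial_update {ι : Type*} [DecidableEq ι] (s : Finset ι)
    (f : ι → ℕ) (hf : 0 < ∑ i ∈ s, f i) :
    Nat.multinomial s f = ∑ i ∈ s with 0 < f i, Nat.multinomial s (update f i (f i - 1)) := by
  have key : ∀ i ∈ s, 0 < f i →
      (∑ j ∈ s, f j) * Nat.multinomial s (update f i (f i - 1)) = f i * Nat.multinomial s f := by
    intro i hi hfi
    have hsum : ∑ j ∈ s, update f i (f i - 1) j = ∑ j ∈ s, f j - 1 := by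
      rw [sum_update_of_mem hi, ← add_sum_erase s f hi, sdiff_singleton_eq_erase]
      omega
    have hprod : f i * ∏ j ∈ s, (update f i (f i - 1) j)! = ∏ j ∈ s, (f j)! := by
      rw [← mul_prod_erase s _ hi, ← mul_prod_erase s (fun j => (f j)!) hi, update_self,
        ← mul_assoc, Nat.mul_factorial_pred hfi.ne']
      exact congrArg _ (prod_congr rfl fun j hj => by rw [update_of_ne (ne_of_mem_erase hj)])
    apply Nat.eq_of_mul_eq_mul_left (prod_pos fun j _ => (update f i (f i - 1) j).factorial_pos)
    rw [mul_left_comm, Nat.multinomial_spec, hsum, Nat.mul_factorial_pred hf.ne',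
      ← mul_assoc, mul_comm _ (f i), hprod, Nat.multinomial_spec]
  apply Nat.eq_of_mul_eq_mul_left hf
  rw [mul_sum, sum_congr rfl fun i hi => key i (mem_filter.1 hi).1 (mem_filter.1 hi).2,
    sum_filter_of_ne fun i _ h => Nat.pos_of_ne_zero (left_ne_zero_of_mul h), sum_mul]

namespace MacMahon

section Degrees

variable {V : Type*} [Fintype V]

def inDeg (q : V → V → ℕ) (k : V) : ℕ := ∑ i, q i k

def outDeg (q : V → V → ℕ) (k : V) : ℕ := ∑ j, q k j

def numEdges (q : V → V → ℕ) : ℕ := ∑ i, ∑ k, q i k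

lemma inDeg_add (p q : V → V → ℕ) (k : V) : inDeg (p + q) k = inDeg p k + inDeg q k := by
  simp only [inDeg, Pi.add_apply, sum_add_distrib]

lemma outDeg_add (p q : V → V → ℕ) (k : V) : outDeg (p + q) k = outDeg p k + outDeg q k := by
  simp only [outDeg, Pi.add_apply, sum_add_distrib]

lemma numEdges_add (p q : V → V → ℕ) : numEdges (p + q) = numEdges p + numEdges q := by
  simp only [numEdges, Pi.add_apply, sum_add_distrib]

lemma inDeg_sub_add {p q : V → V → ℕ} (h : p ≤ q) (k : V) :
    inDeg (q - p) k + inDeg p k = inDeg q k := by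
  rw [← inDeg_add, tsub_add_cancel_of_le h]

lemma outDeg_sub_add {p q : V → V → ℕ} (h : p ≤ q) (k : V) :
    outDeg (q - p) k + outDeg p k = outDeg q k := by
  rw [← outDeg_add, tsub_add_cancel_of_le h]

lemma numEdges_sub_add {p q : V → V → ℕ} (h : p ≤ q) :
    numEdges (q - p) + numEdges p = numEdges q := by
  rw [← numEdges_add, tsub_add_cancel_of_le h]

end Degrees

section Edges

variable {V : Type*} [DecidableEq V]

def edge (a b : V) : V → V → ℕ := fun i k => if i = a ∧ k = b then 1 else 0

def permEdges (σ : Perm V) : V → V → ℕ := fun i k => if σ k = i ∧ i ≠ k then 1 else 0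

def permEdgesExcept (σ : Perm V) (x : V) : V → V → ℕ :=
  fun i k => if k = x then 0 else permEdges σ i k

lemma edge_le_iff {q : V → V → ℕ} {a b : V} : edge a b ≤ q ↔ 0 < q a b := by
  refine ⟨fun h => (by simpa [edge] using h a b : 1 ≤ q a b), fun h i k => ?_⟩
  by_cases hik : i = a ∧ k = b
  · obtain ⟨rfl, rfl⟩ := hik
    simpa [edge] using Nat.one_le_of_lt h
  · simp [edge, hik]

lemma permEdges_eq_permEdgesExcept_add {σ : Perm V} {x : V} (hx : σ x ≠ x) :
    permEdges σ = permEdgesExcept σ x + edge (σ x) x := by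
  funext i k
  simp only [permEdges, permEdgesExcept, edge, Pi.add_apply]
  grind

lemma permEdgesExcept_mul_swap_of_apply_ne {σ : Perm V} {x y : V} (hxy : x ≠ y) (hx : σ x = y)
    (hy : σ y ≠ y) :
    permEdgesExcept σ x = permEdgesExcept (σ * swap x y) x + edge (σ y) y := by
  funext i k
  simp only [permEdges, permEdgesExcept, edge, Pi.add_apply, Perm.mul_apply, swap_apply_def]
  grind

lemma permEdgesExcept_mul_swap_of_apply_eq {σ : Perm V} {x y : V} (hxy : x ≠ y) (hx : σ x = y)
    (hy : σ y = x) :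
    permEdgesExcept σ x = permEdges (σ * swap x y) + edge x y := by
  funext i k
  simp only [permEdges, permEdgesExcept, edge, Pi.add_apply, Perm.mul_apply, swap_apply_def]
  grind

end Edges

variable {V : Type*} [Fintype V] [DecidableEq V]

lemma inDeg_edge (a b k : V) : inDeg (edge a b) k = if k = b then 1 else 0 := by
  simp [inDeg, edge, ite_and]

lemma outDeg_edge (a b k : V) : outDeg (edge a b) k = if k = a then 1 else 0 := by
  simp [outDeg, edge, ite_and]

lemma numEdges_edge (a b : V) : numEdges (edge a b) = 1 := by
  simp [numEdges, edge, ite_and]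

lemma inDeg_permEdges (σ : Perm V) (k : V) :
    inDeg (permEdges σ) k = if σ k = k then 0 else 1 := by
  simp [inDeg, permEdges, ite_and]

lemma outDeg_permEdges (σ : Perm V) (k : V) :
    outDeg (permEdges σ) k = if σ k = k then 0 else 1 := by
  rw [outDeg, ← σ.symm.sum_comp]
  simp [permEdges, ite_and, eq_comm (a := k), σ.symm_apply_eq]

lemma numEdges_permEdges (σ : Perm V) : numEdges (permEdges σ) = #σ.support :=
  calc numEdges (permEdges σ) = ∑ k, inDeg (permEdges σ) k := sum_comm
    _ = #σ.support := by simp [inDeg_permEdges, Perm.support, card_filter]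

/-- The degrees of `q` are those of a union of cycles and one walk from `v` to `y`. -/
def HasWalkDegrees (q : V → V → ℕ) (v y : V) : Prop :=
  ∀ k, outDeg q k + (if k = y then 1 else 0) = inDeg q k + (if k = v then 1 else 0)

lemma HasWalkDegrees.sub_edge {q : V → V → ℕ} {v y j : V} (hq : HasWalkDegrees q v y)
    (hj : 0 < q j y) : HasWalkDegrees (q - edge j y) v j := fun k => by
  have hout := outDeg_sub_add (edge_le_iff.2 hj) k
  have hin := inDeg_sub_add (edge_le_iff.2 hj) k
  rw [outDeg_edge] at hout
  rw [inDeg_edge] at hin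
  have := hq k
  split_ifs at * <;> omega

lemma HasWalkDegrees.inDeg_pos {q : V → V → ℕ} {v y : V} (hq : HasWalkDegrees q v y)
    (hyv : y ≠ v) : 0 < inDeg q y := by
  have := hq y
  rw [if_pos rfl, if_neg hyv] at this
  omega

def colMultinomialProd (q : V → V → ℕ) : ℕ := ∏ k, Nat.multinomial univ fun i => q i k

lemma colMultinomialProd_eq_sum (q : V → V → ℕ) {y : V} (hy : 0 < inDeg q y) :
    colMultinomialProd q = ∑ i with 0 < q i y, colMultinomialProd (q - edge i y) := by
  have hcol : ∀ i, colMultinomialProd (q - edge i y) =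
      Nat.multinomial univ (update (fun j => q j y) i (q i y - 1)) *
        ∏ k ∈ univ.erase y, Nat.multinomial univ fun j => q j k := by
    intro i
    rw [colMultinomialProd, ← mul_prod_erase univ _ (mem_univ y)]
    congr 1
    · congr 1
      funext j
      by_cases hj : j = i <;> simp [edge, hj]
    · refine prod_congr rfl fun k hk => ?_
      simp [edge, ne_of_mem_erase hk]
  rw [colMultinomialProd, ← mul_prod_erase univ _ (mem_univ y),
    Nat.multinomial_eq_sum_multinomial_update _ _ hy, sum_mul]
  exact sum_congr rfl fun i _ => (hcol i).symm

open scoped Classical in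
noncomputable def colMultinomialProdSub (q p : V → V → ℕ) : ℕ :=
  if p ≤ q then colMultinomialProd (q - p) else 0

lemma colMultinomialProdSub_add_edge (q p : V → V → ℕ) (a b : V) :
    colMultinomialProdSub q (p + edge a b) =
      if 0 < q a b then colMultinomialProdSub (q - edge a b) p else 0 := by
  unfold colMultinomialProdSub
  by_cases hab : 0 < q a b
  · rw [if_pos hab, tsub_add_eq_tsub_tsub_swap]
    classical exact if_congr (le_tsub_iff_right (edge_le_iff.2 hab)).symm rfl rfl
  · rw [if_neg hab, if_neg fun h => hab (edge_le_iff.1 (le_add_self.trans h))]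

lemma colMultinomialProdSub_eq_sum {q p : V → V → ℕ} {y : V} (hp : ∀ i, p i y = 0)
    (hy : 0 < inDeg q y) :
    colMultinomialProdSub q p = ∑ i with 0 < q i y, colMultinomialProdSub (q - edge i y) p := by
  unfold colMultinomialProdSub
  by_cases hpq : p ≤ q
  · have hcol : ∀ i, (q - p) i y = q i y := fun i => by simp [hp i]
    have hle : ∀ i, p ≤ q - edge i y := fun i a b => by
      by_cases hb : b = y
      · simp [hb, hp]
      · simpa [edge, hb] using hpq a b
    rw [if_pos hpq, colMultinomialProd_eq_sum (y := y) _ (by simpa [inDeg, hcol] using hy)]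
    simp only [hcol, if_pos (hle _), tsub_right_comm]
  · rw [if_neg hpq]
    exact (sum_eq_zero fun i _ => if_neg fun h => hpq (h.trans tsub_le_self)).symm

/-- `(-1) ^ (number of non-trivial cycles of σ)`. -/
def cycleSign (σ : Perm V) : ℤ := Perm.sign σ * (-1) ^ #σ.support

lemma cycleSign_mul_swap {σ : Perm V} {x y : V} (hxy : x ≠ y) {m : ℕ}
    (h : #σ.support = #(σ * swap x y).support + m) :
    cycleSign (σ * swap x y) = (-1) ^ (m + 1) * cycleSign σ := by
  have hsq : ((-1 : ℤ) ^ m) * (-1) ^ m = 1 := by rw [← mul_pow]; simp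
  rw [cycleSign, cycleSign, h, Perm.sign_mul, Perm.sign_swap hxy, pow_add, pow_add]
  push_cast
  linear_combination ((Perm.sign σ : ℤ) * (-1) ^ #(σ * swap x y).support) * hsq

lemma cycleSign_mul_swap_of_apply_ne {σ : Perm V} {x y : V} (hxy : x ≠ y) (hx : σ x = y)
    (hyx : σ y ≠ x) (hyy : σ y ≠ y) : cycleSign (σ * swap x y) = cycleSign σ := by
  have hτ : (σ * swap x y) x ≠ x := by simpa using hyx
  have hcard : #σ.support = #(σ * swap x y).support + 1 := by
    rw [← numEdges_permEdges, ← numEdges_permEdges,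
      permEdges_eq_permEdgesExcept_add (σ := σ) (x := x) (by rw [hx]; exact hxy.symm),
      permEdgesExcept_mul_swap_of_apply_ne hxy hx hyy,
      permEdges_eq_permEdgesExcept_add (σ := σ * swap x y) hτ]
    simp only [numEdges_add, numEdges_edge]
  rw [cycleSign_mul_swap hxy hcard]
  norm_num

lemma cycleSign_mul_swap_of_apply_eq {σ : Perm V} {x y : V} (hxy : x ≠ y) (hx : σ x = y)
    (hy : σ y = x) : cycleSign (σ * swap x y) = -cycleSign σ := by
  have hcard : #σ.support = #(σ * swap x y).support + 2 := by
    rw [← numEdges_permEdges, ← numEdges_permEdges,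
      permEdges_eq_permEdgesExcept_add (σ := σ) (x := x) (by rw [hx]; exact hxy.symm),
      permEdgesExcept_mul_swap_of_apply_eq hxy hx hy]
    simp only [numEdges_add, numEdges_edge]
  rw [cycleSign_mul_swap hxy hcard]
  norm_num

noncomputable def cycleSum (q : V → V → ℕ) (A : Finset V) : ℤ :=
  ∑ σ : Perm V with ∀ k ∈ A, σ k = k, cycleSign σ * colMultinomialProdSub q (permEdges σ)

/-- The permutations with `σ x = y`, the cycle through `x` being cut open at its edge `y → x`. -/
noncomputable def pathSum (q : V → V → ℕ) (A : Finset V) (x y : V) : ℤ :=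
  ∑ σ : Perm V with σ x = y ∧ ∀ k ∈ A, k ≠ x → k ≠ y → σ k = k,
    cycleSign σ * colMultinomialProdSub q (permEdgesExcept σ x)

lemma cycleSum_eq_sum_sub_edge {q : V → V → ℕ} {A : Finset V} {y : V} (hy : y ∈ A)
    (hq : 0 < inDeg q y) :
    cycleSum q A = ∑ i with 0 < q i y, cycleSum (q - edge i y) A := by
  unfold cycleSum
  rw [sum_comm]
  refine sum_congr rfl fun σ hσ => ?_
  have hfix : σ y = y := (mem_filter.1 hσ).2 y hy
  rw [← mul_sum, colMultinomialProdSub_eq_sum (fun i => by simp [permEdges, hfix, eq_comm]) hq]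
  push_cast
  rfl

lemma cycleSum_eq_add_sum_pathSum (q : V → V → ℕ) {B : Finset V} {y : V} (hy : y ∉ B) :
    cycleSum q B = cycleSum q (insert y B) + ∑ j ∈ (insert y B)ᶜ,
      if 0 < q j y then pathSum (q - edge j y) (insert j (insert y B)) y j else 0 := by
  rw [cycleSum, ← sum_fiberwise _ (fun σ => σ y), ← sum_add_sum_compl (insert y B),
    sum_insert hy, sum_eq_zero (s := B), add_zero]
  · congr 1
    · rw [cycleSum, filter_filter]
      refine sum_congr (filter_congr fun σ _ => ?_) fun _ _ => rfl
      simp only [forall_mem_insert]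
      tauto
    · refine sum_congr rfl fun j hj => ?_
      have hjy : j ≠ y := by rintro rfl; simp at hj
      have hjB : j ∉ B := by simp at hj; exact hj.2
      have hP : ∀ σ ∈ ({σ : Perm V | ∀ k ∈ B, σ k = k} : Finset _).filter (fun σ => σ y = j),
          colMultinomialProdSub q (permEdges σ) =
            if 0 < q j y then colMultinomialProdSub (q - edge j y) (permEdgesExcept σ y)
            else 0 := by
        intro σ hσ
        have hσy : σ y = j := (mem_filter.1 hσ).2
        rw [permEdges_eq_permEdgesExcept_add (hσy ▸ hjy), hσy, colMultinomialProdSub_add_edge]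
      rw [sum_congr rfl fun σ hσ => by rw [hP σ hσ]]
      split_ifs with hq
      · rw [pathSum, filter_filter]
        refine sum_congr (filter_congr fun σ _ => ?_) fun _ _ => rfl
        refine ⟨fun ⟨hB, hσy⟩ => ⟨hσy, fun k hk hky hkj => hB k (by simpa [hky, hkj] using hk)⟩,
          fun ⟨hσy, h⟩ => ⟨fun k hk => h k (by simp [hk]) (ne_of_mem_of_not_mem hk hy)
            (ne_of_mem_of_not_mem hk hjB), hσy⟩⟩
      · simp
  · intro j hj
    refine sum_eq_zero fun σ hσ => ?_
    simp only [mem_filter, mem_univ, true_and] at hσ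
    exact absurd (σ.injective (hσ.2.trans (hσ.1 j hj).symm)) (by rintro rfl; exact hy hj)

lemma sum_filter_apply_eq_neg_cycleSum (q : V → V → ℕ) {A : Finset V} {x y : V} (hxy : x ≠ y)
    (hx : x ∈ A) (hy : y ∈ A) :
    ∑ σ : Perm V with (σ x = y ∧ ∀ k ∈ A, k ≠ x → k ≠ y → σ k = k) ∧ σ y = x,
      cycleSign σ * colMultinomialProdSub q (permEdgesExcept σ x) =
      -(if 0 < q x y then cycleSum (q - edge x y) A else 0) := by
  have hfib : ∑ σ : Perm V with (σ x = y ∧ ∀ k ∈ A, k ≠ x → k ≠ y → σ k = k) ∧ σ y = x,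
        cycleSign σ * colMultinomialProdSub q (permEdgesExcept σ x) =
      ∑ τ : Perm V with ∀ k ∈ A, τ k = k,
        -(cycleSign τ * colMultinomialProdSub q (permEdges τ + edge x y)) := by
    refine sum_nbij' (· * swap x y) (· * swap x y) ?_ ?_ (fun σ _ => mul_swap_mul_self x y σ)
      (fun σ _ => mul_swap_mul_self x y σ) ?_
    · simp only [mem_filter, mem_univ, true_and]
      rintro σ ⟨⟨hσx, hσA⟩, hσy⟩ k hk
      by_cases hkx : k = x
      · simp [hkx, hσy]
      by_cases hky : k = y
      · simp [hky, hσx]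
      simp [swap_apply_of_ne_of_ne hkx hky, hσA k hk hkx hky]
    · simp only [mem_filter, mem_univ, true_and]
      intro τ hτ
      refine ⟨⟨by simp [hτ y hy], fun k hk hkx hky => ?_⟩, by simp [hτ x hx]⟩
      simp [swap_apply_of_ne_of_ne hkx hky, hτ k hk]
    · simp only [mem_filter, mem_univ, true_and]
      rintro σ ⟨⟨hσx, -⟩, hσy⟩
      rw [permEdgesExcept_mul_swap_of_apply_eq hxy hσx hσy,
        cycleSign_mul_swap_of_apply_eq hxy hσx hσy]
      ring
  rw [hfib, sum_neg_distrib, cycleSum]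
  split_ifs with hq <;> simp [colMultinomialProdSub_add_edge, hq]

lemma sum_filter_apply_eq_pathSum (q : V → V → ℕ) {A : Finset V} {x y j : V} (hxy : x ≠ y)
    (hx : x ∈ A) (hy : y ∈ A) (hj : j ∉ A) :
    ∑ σ : Perm V with (σ x = y ∧ ∀ k ∈ A, k ≠ x → k ≠ y → σ k = k) ∧ σ y = j,
      cycleSign σ * colMultinomialProdSub q (permEdgesExcept σ x) =
      if 0 < q j y then pathSum (q - edge j y) (insert j A) x j else 0 := by
  have hjx : j ≠ x := fun h => hj (h ▸ hx)
  have hjy : j ≠ y := fun h => hj (h ▸ hy)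
  have hfib : ∑ σ : Perm V with (σ x = y ∧ ∀ k ∈ A, k ≠ x → k ≠ y → σ k = k) ∧ σ y = j,
        cycleSign σ * colMultinomialProdSub q (permEdgesExcept σ x) =
      ∑ τ : Perm V with τ x = j ∧ ∀ k ∈ insert j A, k ≠ x → k ≠ j → τ k = k,
        cycleSign τ * colMultinomialProdSub q (permEdgesExcept τ x + edge j y) := by
    refine sum_nbij' (· * swap x y) (· * swap x y) ?_ ?_ (fun σ _ => mul_swap_mul_self x y σ)
      (fun σ _ => mul_swap_mul_self x y σ) ?_
    · simp only [mem_filter, mem_univ, true_and]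
      rintro σ ⟨⟨hσx, hσA⟩, hσy⟩
      refine ⟨by simp [hσy], fun k hk hkx hkj => ?_⟩
      by_cases hky : k = y
      · simp [hky, hσx]
      simp [swap_apply_of_ne_of_ne hkx hky, hσA k (mem_of_mem_insert_of_ne hk hkj) hkx hky]
    · simp only [mem_filter, mem_univ, true_and]
      rintro τ ⟨hτx, hτA⟩
      refine ⟨⟨by simp [hτA y (mem_insert_of_mem hy) hxy.symm hjy.symm],
        fun k hk hkx hky => ?_⟩, by simp [hτx]⟩
      simp [swap_apply_of_ne_of_ne hkx hky,
        hτA k (mem_insert_of_mem hk) hkx (ne_of_mem_of_not_mem hk hj)]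
    · simp only [mem_filter, mem_univ, true_and]
      rintro σ ⟨⟨hσx, -⟩, hσy⟩
      rw [permEdgesExcept_mul_swap_of_apply_ne hxy hσx (hσy ▸ hjy), hσy,
        cycleSign_mul_swap_of_apply_ne hxy hσx (hσy ▸ hjx) (hσy ▸ hjy)]
  rw [hfib, pathSum]
  split_ifs with hq <;> simp [colMultinomialProdSub_add_edge, hq]

lemma pathSum_eq_neg_add_sum_pathSum (q : V → V → ℕ) {A : Finset V} {x y : V} (hxy : x ≠ y)
    (hx : x ∈ A) (hy : y ∈ A) :
    pathSum q A x y = -(if 0 < q x y then cycleSum (q - edge x y) A else 0) +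
      ∑ j ∈ Aᶜ, if 0 < q j y then pathSum (q - edge j y) (insert j A) x j else 0 := by
  rw [pathSum, ← sum_fiberwise _ (fun σ => σ y), ← sum_add_sum_compl A, sum_eq_single_of_mem x hx]
  · simp only [filter_filter]
    rw [sum_filter_apply_eq_neg_cycleSum q hxy hx hy]
    exact congrArg _ (sum_congr rfl fun j hj =>
      sum_filter_apply_eq_pathSum q hxy hx hy (mem_compl.1 hj))
  · intro j hj hjx
    refine sum_eq_zero fun σ hσ => absurd hσ ?_
    simp only [mem_filter, mem_univ, true_and, not_and]
    intro ⟨hσx, hσA⟩ hσy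
    by_cases hjy : j = y
    · exact hxy (σ.injective (hσx.trans (hjy ▸ hσy).symm))
    · exact hjy (σ.injective (hσy.trans (hσA j hj hjx hjy).symm)).symm

lemma cycleSum_add_sum_pathSum_eq_zero {q : V → V → ℕ} {B : Finset V} {y v : V}
    (hdiag : ∀ k, q k k = 0) (hy : y ∉ B) (hv : v ∈ insert y B) (hin : 0 < inDeg q y)
    (hq : HasWalkDegrees q v y) :
    cycleSum q B + ∑ x ∈ B, pathSum q (insert y B) x y = 0 := by
  induction hs : numEdges q using Nat.strong_induction_on generalizing q B y v with
  | _ s ih =>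
  have step : ∀ j ∈ (insert y B)ᶜ,
      ((if 0 < q j y then cycleSum (q - edge j y) (insert y B) else 0) +
        if 0 < q j y then pathSum (q - edge j y) (insert j (insert y B)) y j else 0) +
      ∑ x ∈ B, (if 0 < q j y then pathSum (q - edge j y) (insert j (insert y B)) x j else 0) =
        0 := by
    intro j hj
    rw [mem_compl] at hj
    by_cases hjy : 0 < q j y
    · simp only [if_pos hjy]
      have hsize : numEdges (q - edge j y) < s := by
        have := numEdges_sub_add (edge_le_iff.2 hjy)
        rw [numEdges_edge] at this
        omega
      rw [add_assoc,
        ← sum_insert (f := fun x => pathSum (q - edge j y) (insert j (insert y B)) x j) hy]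
      exact ih _ hsize (fun k => by simp [hdiag k]) hj (mem_insert_of_mem hv)
        ((hq.sub_edge hjy).inDeg_pos fun h => hj (h ▸ hv)) (hq.sub_edge hjy) rfl
    · simp [hjy]
  have hcol : ∑ i with 0 < q i y, cycleSum (q - edge i y) (insert y B) =
      ∑ x ∈ B, (if 0 < q x y then cycleSum (q - edge x y) (insert y B) else 0) +
        ∑ j ∈ (insert y B)ᶜ, if 0 < q j y then cycleSum (q - edge j y) (insert y B) else 0 := by
    rw [sum_filter, ← sum_add_sum_compl (insert y B), sum_insert hy, hdiag y,
      if_neg (lt_irrefl 0), zero_add]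
  rw [cycleSum_eq_add_sum_pathSum q hy, cycleSum_eq_sum_sub_edge (mem_insert_self y B) hin, hcol,
    sum_congr rfl fun x hx => pathSum_eq_neg_add_sum_pathSum q (ne_of_mem_of_not_mem hx hy)
      (mem_insert_of_mem hx) (mem_insert_self y B),
    sum_add_distrib, sum_neg_distrib, sum_comm (s := B)]
  have := sum_eq_zero step
  rw [sum_add_distrib, sum_add_distrib] at this
  linear_combination this

theorem sum_cycleSign_mul_colMultinomialProdSub {q : V → V → ℕ} (hdiag : ∀ k, q k k = 0)
    (hbal : ∀ k, outDeg q k = inDeg q k) :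
    ∑ σ : Perm V, cycleSign σ * colMultinomialProdSub q (permEdges σ) =
      if q = 0 then 1 else 0 := by
  split_ifs with hq
  · subst hq
    rw [sum_eq_single 1]
    · have h1 : permEdges (1 : Perm V) = 0 := funext fun i => funext fun k => by
        simp [permEdges, eq_comm]
      simp [cycleSign, colMultinomialProdSub, colMultinomialProd, h1, Nat.multinomial]
    · intro σ _ hσ
      obtain ⟨k, hk⟩ : ∃ k, σ k ≠ k := not_forall.1 fun h => hσ (Equiv.ext h)
      have : ¬permEdges σ ≤ 0 := fun h => by simpa [permEdges, hk] using h (σ k) k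
      simp [colMultinomialProdSub, this]
    · simp
  · obtain ⟨y, hy⟩ : ∃ y, 0 < inDeg q y := by
      by_contra! h
      refine hq (funext fun i => funext fun k => ?_)
      exact sum_eq_zero_iff.1 (Nat.le_zero.1 (h k)) i (mem_univ i)
    have := cycleSum_add_sum_pathSum_eq_zero (B := ∅) hdiag (notMem_empty y)
      (mem_insert_self y ∅) hy fun k => by rw [hbal k]
    simpa [cycleSum] using this

end MacMahon

open MacMahon

section

variable {n : ℕ}

def edgeMatrix (e : OffDiag n →₀ ℕ) : Fin n → Fin n → ℕ :=
  fun i k => if h : i = k then 0 else e ⟨(i, k), h⟩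

lemma edgeMatrix_apply (e : OffDiag n →₀ ℕ) (p : OffDiag n) : edgeMatrix e p.1.1 p.1.2 = e p :=
  dif_neg p.2

lemma edgeMatrix_self (e : OffDiag n →₀ ℕ) (k : Fin n) : edgeMatrix e k k = 0 := dif_pos rfl

lemma colIn_eq_inDeg (e : OffDiag n →₀ ℕ) (k : Fin n) : colIn n e k = inDeg (edgeMatrix e) k :=
  rfl

lemma rowOut_eq_outDeg (e : OffDiag n →₀ ℕ) (k : Fin n) :
    rowOut n e k = outDeg (edgeMatrix e) k :=
  rfl

lemma edgeMatrix_le_edgeMatrix_iff {a b : OffDiag n →₀ ℕ} :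
    edgeMatrix a ≤ edgeMatrix b ↔ a ≤ b := by
  refine ⟨fun h p => ?_, fun h i k => ?_⟩
  · simpa [edgeMatrix_apply] using h p.1.1 p.1.2
  · by_cases hik : i = k
    · simp [edgeMatrix, hik]
    · simpa [edgeMatrix, hik] using h ⟨(i, k), hik⟩

lemma edgeMatrix_sub (a b : OffDiag n →₀ ℕ) :
    edgeMatrix (a - b) = edgeMatrix a - edgeMatrix b := by
  funext i k
  by_cases hik : i = k
  · simp [edgeMatrix, hik]
  · simp only [edgeMatrix, dif_neg hik, Pi.sub_apply]
    rfl

lemma edgeMatrix_zero : edgeMatrix (0 : OffDiag n →₀ ℕ) = 0 :=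
  funext fun i => funext fun k => by
    unfold edgeMatrix
    split_ifs <;> rfl

lemma edgeMatrix_eq_zero_iff {e : OffDiag n →₀ ℕ} : edgeMatrix e = 0 ↔ e = 0 := by
  rw [← le_zero_iff, ← le_zero_iff, ← edgeMatrix_zero, edgeMatrix_le_edgeMatrix_iff]

lemma numEdges_edgeMatrix (e : OffDiag n →₀ ℕ) : numEdges (edgeMatrix e) = totDeg n e := by
  rw [numEdges, ← Fintype.sum_prod_type',
    ← Fintype.sum_subtype_add_sum_subtype (fun p : Fin n × Fin n => p.1 ≠ p.2)]
  have hdiag : ∑ p : {p : Fin n × Fin n // ¬p.1 ≠ p.2}, edgeMatrix e p.1.1 p.1.2 = 0 :=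
    Fintype.sum_eq_zero _ fun p => dif_pos (not_not.1 p.2)
  rw [hdiag, add_zero]
  exact Fintype.sum_congr _ _ fun p => edgeMatrix_apply e p

lemma colMultinomialProd_edgeMatrix (e : OffDiag n →₀ ℕ) :
    colMultinomialProd (edgeMatrix e) = ∏ k, colMultinomial n e k :=
  prod_congr rfl fun k _ => (Nat.multinomial_congr_of_sdiff (erase_subset k univ)
    (fun i hi => by simp_all [edgeMatrix]) fun i _ => rfl).symm

/-- Typed as `OffDiag n`, so that `Finsupp.single` and `rw` do not see the underlying subtype. -/
def OffDiag.mk (i k : Fin n) (h : i ≠ k) : OffDiag n := ⟨(i, k), h⟩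

lemma OffDiag.mk_inj {i k i' k' : Fin n} {h : i ≠ k} {h' : i' ≠ k'} :
    OffDiag.mk i k h = OffDiag.mk i' k' h' ↔ i = i' ∧ k = k' := by
  refine ⟨fun h => ?_, fun ⟨hi, hk⟩ => by subst hi hk; rfl⟩
  simpa [OffDiag.mk] using congrArg (fun p : OffDiag n => p.1) h

noncomputable def permExponent (σ : Perm (Fin n)) : OffDiag n →₀ ℕ :=
  ∑ k, if h : σ k = k then 0 else Finsupp.single (OffDiag.mk (σ k) k h) 1

lemma edgeMatrix_permExponent (σ : Perm (Fin n)) :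
    edgeMatrix (permExponent σ) = permEdges σ := by
  funext i k
  by_cases hik : i = k
  · simp [edgeMatrix, permEdges, hik]
  · rw [edgeMatrix, dif_neg hik]
    change permExponent σ (OffDiag.mk i k hik) = _
    rw [permExponent, Finsupp.finsetSum_apply, sum_eq_single k]
    · by_cases h : σ k = k
      · simp [h, permEdges, eq_comm]
      · simp [h, permEdges, hik, Finsupp.single_apply, OffDiag.mk_inj]
    · intro m _ hmk
      split_ifs
      · rfl
      · simp [OffDiag.mk_inj, hmk.symm]
    · simp

lemma dgen_ne_zero (k : Fin n) : dgen n k ≠ 0 :=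
  (map_ne_zero_iff _ (IsFractionRing.injective (MvPolynomial (Fin n) ℚ) (DField n))).2
    (MvPolynomial.X_ne_zero k)

lemma Tmat_apply_perm (σ : Perm (Fin n)) (k : Fin n) :
    Tmat n (σ k) k = MvPowerSeries.monomial
      (if h : σ k = k then 0 else Finsupp.single (OffDiag.mk (σ k) k h) 1)
      (if σ k = k then dgen n k else 1) := by
  by_cases h : σ k = k
  · simp [Tmat, h]
  · simp [Tmat, h, OffDiag.mk, MvPowerSeries.X]

lemma coeff_mul_det_Tmat (f : MvPowerSeries (OffDiag n) (DField n)) (e : OffDiag n →₀ ℕ) :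
    MvPowerSeries.coeff e (f * (Tmat n).det) = ∑ σ : Perm (Fin n), (Perm.sign σ : ℤ) •
      if permExponent σ ≤ e then
        MvPowerSeries.coeff (e - permExponent σ) f * ∏ k, if σ k = k then dgen n k else 1
      else 0 := by
  rw [Matrix.det_apply, mul_sum, map_sum]
  refine sum_congr rfl fun σ _ => ?_
  rw [prod_congr rfl fun k _ => Tmat_apply_perm σ k, MvPowerSeries.prod_monomial, Units.smul_def,
    mul_smul_comm, map_zsmul, MvPowerSeries.coeff_mul_monomial]
  rfl

open scoped Classical in
noncomputable def ctCoeff (n : ℕ) (e : OffDiag n →₀ ℕ) : DField n :=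
  if ∀ k : Fin n, colIn n e k = rowOut n e k then
    (-1 : DField n) ^ totDeg n e * ((∏ k : Fin n, colMultinomial n e k : ℕ) : DField n) *
      ∏ k : Fin n, dgen n k ^ (-(colIn n e k : ℤ) - 1)
  else 0

lemma permEdges_le_edgeMatrix_iff {σ : Perm (Fin n)} {e : OffDiag n →₀ ℕ} :
    permEdges σ ≤ edgeMatrix e ↔ permExponent σ ≤ e := by
  rw [← edgeMatrix_permExponent, edgeMatrix_le_edgeMatrix_iff]

lemma edgeMatrix_sub_permExponent (σ : Perm (Fin n)) (e : OffDiag n →₀ ℕ) :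
    edgeMatrix (e - permExponent σ) = edgeMatrix e - permEdges σ := by
  rw [edgeMatrix_sub, edgeMatrix_permExponent]

variable {σ : Perm (Fin n)} {e : OffDiag n →₀ ℕ}

lemma colIn_sub_permExponent_add (hle : permExponent σ ≤ e) (k : Fin n) :
    colIn n (e - permExponent σ) k + (if σ k = k then 0 else 1) = colIn n e k := by
  rw [← inDeg_permEdges, colIn_eq_inDeg, colIn_eq_inDeg, edgeMatrix_sub_permExponent]
  exact inDeg_sub_add (permEdges_le_edgeMatrix_iff.2 hle) k

lemma rowOut_sub_permExponent_add (hle : permExponent σ ≤ e) (k : Fin n) :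
    rowOut n (e - permExponent σ) k + (if σ k = k then 0 else 1) = rowOut n e k := by
  rw [← outDeg_permEdges, rowOut_eq_outDeg, rowOut_eq_outDeg, edgeMatrix_sub_permExponent]
  exact outDeg_sub_add (permEdges_le_edgeMatrix_iff.2 hle) k

lemma totDeg_sub_permExponent_add (hle : permExponent σ ≤ e) :
    totDeg n (e - permExponent σ) + #σ.support = totDeg n e := by
  rw [← numEdges_edgeMatrix, ← numEdges_edgeMatrix, edgeMatrix_sub_permExponent,
    ← numEdges_permEdges, numEdges_sub_add (permEdges_le_edgeMatrix_iff.2 hle)]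

lemma prod_dgen_zpow_sub_permExponent_mul (hle : permExponent σ ≤ e) :
    (∏ k, dgen n k ^ (-(colIn n (e - permExponent σ) k : ℤ) - 1)) *
      (∏ k, if σ k = k then dgen n k else 1) = ∏ k, dgen n k ^ (-(colIn n e k : ℤ)) := by
  rw [← prod_mul_distrib]
  refine prod_congr rfl fun k _ => ?_
  have := colIn_sub_permExponent_add hle k
  split_ifs at this ⊢
  · rw [← this, add_zero, ← zpow_add_one₀ (dgen_ne_zero k), sub_add_cancel]
  · rw [← this, mul_one]
    push_cast
    ring_nf

open scoped Classical in
lemma sign_smul_ctCoeff_mul (hle : permExponent σ ≤ e) :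
    (Perm.sign σ : ℤ) • (ctCoeff n (e - permExponent σ) * ∏ k, if σ k = k then dgen n k else 1) =
      (if ∀ k, colIn n e k = rowOut n e k then
        (-1) ^ totDeg n e * ∏ k, dgen n k ^ (-(colIn n e k : ℤ)) else 0) *
      (cycleSign σ * colMultinomialProdSub (edgeMatrix e) (permEdges σ) : ℤ) := by
  have hbal : (∀ k, colIn n (e - permExponent σ) k = rowOut n (e - permExponent σ) k) ↔
      ∀ k, colIn n e k = rowOut n e k := forall_congr' fun k => by
    have := colIn_sub_permExponent_add hle k
    have := rowOut_sub_permExponent_add hle k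
    omega
  rw [ctCoeff, colMultinomialProdSub, if_pos (permEdges_le_edgeMatrix_iff.2 hle),
    ← edgeMatrix_sub_permExponent, colMultinomialProd_edgeMatrix]
  by_cases hb : ∀ k, colIn n e k = rowOut n e k
  · have hs : (-1 : DField n) ^ totDeg n (e - permExponent σ) =
        (-1) ^ totDeg n e * (-1) ^ #σ.support := by
      rw [← totDeg_sub_permExponent_add hle, pow_add, mul_assoc, ← pow_add, ← two_mul, pow_mul,
        neg_one_sq, one_pow, mul_one]
    rw [if_pos (hbal.2 hb), if_pos hb, hs, mul_assoc _ _ (∏ k, _),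
      ← prod_dgen_zpow_sub_permExponent_mul hle, zsmul_eq_mul, cycleSign]
    push_cast
    ring
  · rw [if_neg (mt hbal.1 hb), if_neg hb]
    simp

open scoped Classical in
lemma coeff_mul_det_Tmat_of_coeff_eq {f : MvPowerSeries (OffDiag n) (DField n)}
    (hf : ∀ e, MvPowerSeries.coeff e f = ctCoeff n e) (e : OffDiag n →₀ ℕ) :
    MvPowerSeries.coeff e (f * (Tmat n).det) =
      (if ∀ k, colIn n e k = rowOut n e k then
        (-1) ^ totDeg n e * ∏ k, dgen n k ^ (-(colIn n e k : ℤ)) else 0) *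
      ((∑ σ : Perm (Fin n), cycleSign σ * colMultinomialProdSub (edgeMatrix e) (permEdges σ) : ℤ) :
        DField n) := by
  rw [coeff_mul_det_Tmat, Int.cast_sum, mul_sum]
  refine sum_congr rfl fun σ _ => ?_
  by_cases hle : permExponent σ ≤ e
  · rw [if_pos hle, hf, sign_smul_ctCoeff_mul hle]
  · simp [hle, colMultinomialProdSub, permEdges_le_edgeMatrix_iff]

end

open scoped Classical in
theorem constant_term_eq_inv_det_general (n : ℕ)
    (CT : MvPowerSeries (OffDiag n) (DField n))
    (hCT : ∀ e : OffDiag n →₀ ℕ,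
      MvPowerSeries.coeff (R := DField n) e CT =
        if ∀ k : Fin n, colIn n e k = rowOut n e k then
          (-1 : DField n) ^ totDeg n e *
            ((∏ k : Fin n, colMultinomial n e k : ℕ) : DField n) *
            ∏ k : Fin n, dgen n k ^ (-(colIn n e k : ℤ) - 1)
        else 0) :
    CT * (Tmat n).det = 1 := by
  ext e
  rw [coeff_mul_det_Tmat_of_coeff_eq hCT, MvPowerSeries.coeff_one]
  by_cases hb : ∀ k, colIn n e k = rowOut n e k
  · rw [if_pos hb, sum_cycleSign_mul_colMultinomialProdSub (edgeMatrix_self e)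
      fun k => (hb k).symm]
    simp only [edgeMatrix_eq_zero_iff]
    split_ifs with he
    · subst he
      simp [colIn_eq_inDeg, ← numEdges_edgeMatrix, edgeMatrix_zero, inDeg, numEdges]
    · simp
  · rw [if_neg hb, zero_mul, if_neg]
    rintro rfl
    exact hb fun k => by simp [colIn_eq_inDeg, rowOut_eq_outDeg, edgeMatrix_zero, inDeg, outDeg]

open scoped Classical in
/-- Appendix A Proposition (a form of the MacMahon Master Theorem): the series `CT`,
whose coefficient at the monomial `∏ u_{ik}^{r_{ik}}` is
`(-1)^{|r|} ∏_k [(∑_{i≠k} r_{ik})! / ∏_{i≠k} r_{ik}!] ∏_k d_k^{-(∑_{i≠k} r_{ik}) - 1}`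
when `r` satisfies the balance condition `∑_{i≠k} r_{ik} = ∑_{j≠k} r_{kj}` for all `k`,
and `0` otherwise, is the inverse of `det T` in `F[[u_{ik} : i ≠ k]]`. -/
theorem constant_term_eq_inv_det (n : ℕ) (hn : 1 ≤ n)
    (CT : MvPowerSeries (OffDiag n) (DField n))
    (hCT : ∀ e : OffDiag n →₀ ℕ,
      MvPowerSeries.coeff (R := DField n) e CT =
        if ∀ k : Fin n, colIn n e k = rowOut n e k then
          (-1 : DField n) ^ totDeg n e *
            ((∏ k : Fin n, colMultinomial n e k : ℕ) : DField n) *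
            ∏ k : Fin n, dgen n k ^ (-(colIn n e k : ℤ) - 1)
        else 0) :
    CT * (Tmat n).det = 1 :=
  constant_term_eq_inv_det_general n CT hCT
end
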